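/- Fix modal formulas φ and ψ such that φ → ψ is valid. For every combined type τ = (τL, τR) that belongs to no quasi-model (equivalently, that gets eliminated in a type elimination sequence), there exists a modal formula θ_τ such that: ⊨ (⋀τL) → θ_τ; ⊨ θ_τ → ¬(⋀τR); and every proposition letter occurring positively (negatively) in θ_τ occurs positively (negatively) in both φ and ψ. -/

import Mathlib

inductive ModalFormula (α : Type) : Type
  | atom : α → ModalFormula α
  | top  : ModalFormula α
  | bot  : ModalFormula α
  | neg  : ModalFormula α → ModalFormula α
  | or   : ModalFormula α → ModalFormula α → ModalFormula α
  | and  : ModalFormula α → ModalFormula α → ModalFormula α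
  | dia  : ModalFormula α → ModalFormula α
  | box  : ModalFormula α → ModalFormula α

structure KripkeModel (α : Type) where
  World : Type
  R : World → World → Prop
  V : α → Set World

def Satisfies {α : Type} (M : KripkeModel α) : M.World → ModalFormula α → Prop
  | w, .atom p  => w ∈ M.V p
  | _, .top     => True
  | _, .bot     => False
  | w, .neg φ   => ¬ Satisfies M w φ
  | w, .or φ ψ  => Satisfies M w φ ∨ Satisfies M w ψ
  | w, .and φ ψ => Satisfies M w φ ∧ Satisfies M w ψ
  | w, .dia φ   => ∃ v, M.R w v ∧ Satisfies M v φ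
  | w, .box φ   => ∀ v, M.R w v → Satisfies M v φ

def Valid {α : Type} (φ : ModalFormula α) : Prop :=
  ∀ (M : KripkeModel α) (w : M.World), Satisfies M w φ

def ModalFormula.impl {α : Type} (φ ψ : ModalFormula α) : ModalFormula α :=
  .or (.neg φ) ψ

def sig {α : Type} : ModalFormula α → Set α
  | .atom p  => {p}
  | .top     => ∅
  | .bot     => ∅
  | .neg φ   => sig φ
  | .or φ ψ  => sig φ ∪ sig ψ
  | .and φ ψ => sig φ ∪ sig ψ
  | .dia φ   => sig φ
  | .box φ   => sig φ

def IsBisimulation {α : Type} (τ : Set α) (M M' : KripkeModel α)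
    (Z : M.World → M'.World → Prop) : Prop :=
  ∀ w w', Z w w' →
    (∀ p ∈ τ, (w ∈ M.V p ↔ w' ∈ M'.V p)) ∧
    (∀ v, M.R w v → ∃ v', M'.R w' v' ∧ Z v v') ∧
    (∀ v', M'.R w' v' → ∃ v, M.R w v ∧ Z v v')

def Bisimilar {α : Type} (τ : Set α) (M : KripkeModel α) (w : M.World)
    (M' : KripkeModel α) (w' : M'.World) : Prop :=
  ∃ Z, IsBisimulation τ M M' Z ∧ Z w w'

mutual
  /-- Negation normal form of a modal formula. -/
  def nnf {α : Type} : ModalFormula α → ModalFormula α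
    | .atom p  => .atom p
    | .top     => .top
    | .bot     => .bot
    | .neg φ   => nnfNeg φ
    | .and φ ψ => .and (nnf φ) (nnf ψ)
    | .or φ ψ  => .or (nnf φ) (nnf ψ)
    | .dia φ   => .dia (nnf φ)
    | .box φ   => .box (nnf φ)
  /-- Negation normal form of the negation of a modal formula. -/
  def nnfNeg {α : Type} : ModalFormula α → ModalFormula α
    | .atom p  => .neg (.atom p)
    | .top     => .bot
    | .bot     => .top
    | .neg φ   => nnf φ
    | .and φ ψ => .or (nnfNeg φ) (nnfNeg ψ)
    | .or φ ψ  => .and (nnfNeg φ) (nnfNeg ψ)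
    | .dia φ   => .box (nnfNeg φ)
    | .box φ   => .dia (nnfNeg φ)
end

/-- The subformulas of an NNF formula (with `SUBF(¬p) = {¬p}`). -/
def subf {α : Type} : ModalFormula α → Set (ModalFormula α)
  | .atom p  => {.atom p}
  | .top     => {.top}
  | .bot     => {.bot}
  | .neg φ   => {.neg φ}
  | .and φ ψ => subf φ ∪ subf ψ ∪ {.and φ ψ}
  | .or φ ψ  => subf φ ∪ subf ψ ∪ {.or φ ψ}
  | .dia φ   => subf φ ∪ {.dia φ}
  | .box φ   => subf φ ∪ {.box φ}

/-- A locally-consistent set of formulas. -/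
def LocallyConsistent {α : Type} (X : Set (ModalFormula α)) : Prop :=
  (∀ φ ψ : ModalFormula α, .and φ ψ ∈ X → φ ∈ X ∧ ψ ∈ X) ∧
  (∀ φ ψ : ModalFormula α, .or φ ψ ∈ X → φ ∈ X ∨ ψ ∈ X) ∧
  (.bot : ModalFormula α) ∉ X ∧
  (∀ p : α, ¬((.atom p : ModalFormula α) ∈ X ∧ (.neg (.atom p) : ModalFormula α) ∈ X))

/-- An L-type (relative to the fixed antecedent φ). -/
def IsLType {α : Type} (φ : ModalFormula α) (X : Set (ModalFormula α)) : Prop :=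
  X ⊆ subf (nnf φ) ∧ LocallyConsistent X

/-- An R-type (relative to the fixed consequent ψ). -/
def IsRType {α : Type} (ψ : ModalFormula α) (X : Set (ModalFormula α)) : Prop :=
  X ⊆ subf (nnf (.neg ψ)) ∧ LocallyConsistent X

/-- A combined type: a pair of an L-type and an R-type. -/
def IsType {α : Type} (φ ψ : ModalFormula α)
    (τ : Set (ModalFormula α) × Set (ModalFormula α)) : Prop :=
  IsLType φ τ.1 ∧ IsRType ψ τ.2

/-- Overlap-consistency of a combined type. -/
def OverlapConsistent {α : Type}
    (τ : Set (ModalFormula α) × Set (ModalFormula α)) : Prop :=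
  ∀ p : α,
    ¬((.atom p : ModalFormula α) ∈ τ.1 ∧ (.neg (.atom p) : ModalFormula α) ∈ τ.2) ∧
    ¬((.neg (.atom p) : ModalFormula α) ∈ τ.1 ∧ (.atom p : ModalFormula α) ∈ τ.2)

/-- Viable successor relation on combined types. -/
def TypeSucc {α : Type}
    (τ τ' : Set (ModalFormula α) × Set (ModalFormula α)) : Prop :=
  (∀ χ : ModalFormula α, .box χ ∈ τ.1 → χ ∈ τ'.1) ∧
  (∀ χ : ModalFormula α, .box χ ∈ τ.2 → χ ∈ τ'.2)

/-- A quasi-model for the pair (φ, ψ). -/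
def QuasiModel {α : Type} (φ ψ : ModalFormula α)
    (X : Set (Set (ModalFormula α) × Set (ModalFormula α))) : Prop :=
  (∀ τ ∈ X, IsType φ ψ τ) ∧
  (∀ τ ∈ X, OverlapConsistent τ) ∧
  (∀ τ ∈ X, ∀ χ : ModalFormula α,
    ((.dia χ : ModalFormula α) ∈ τ.1 → ∃ τ' ∈ X, TypeSucc τ τ' ∧ χ ∈ τ'.1) ∧
    ((.dia χ : ModalFormula α) ∈ τ.2 → ∃ τ' ∈ X, TypeSucc τ τ' ∧ χ ∈ τ'.2))

/-- `occ true χ` is the set of proposition letters occurring positively in `χ`;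
`occ false χ` is the set of letters occurring negatively in `χ`. -/
def occ {α : Type} : Bool → ModalFormula α → Set α
  | b, .atom p  => if b then {p} else ∅
  | _, .top     => ∅
  | _, .bot     => ∅
  | b, .neg φ   => occ (!b) φ
  | b, .or φ ψ  => occ b φ ∪ occ b ψ
  | b, .and φ ψ => occ b φ ∪ occ b ψ
  | b, .dia φ   => occ b φ
  | b, .box φ   => occ b φ

/-!
The overlap-consistent types that have no interpolant form a quasi-model, so an eliminated type
has an interpolant. An overlap-inconsistent type is interpolated by its clashing literal. If
`◇χ ∈ τL` had no successor among the uninterpolated types, every candidate successor `(σL, σR)`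
would have an interpolant `θ σL σR`, and `◇ ⋁_{σL} ⋀_{σR} θ σL σR` would interpolate `τ`: on the
left take `σL` to be the L-type realized at a `χ`-successor, on the right take `σR` to be the
R-type realized at a successor where the disjunction holds. Dually, `□ ⋁_{σL} ⋀_{σR} θ σL σR`
interpolates `τ` when `◇χ ∈ τR`.
-/

variable {α : Type}

theorem mem_subf_self (θ : ModalFormula α) : θ ∈ subf θ := by
  cases θ <;> simp [subf]

theorem subf_subset_of_mem {χ θ : ModalFormula α} (h : χ ∈ subf θ) : subf χ ⊆ subf θ := by
  induction θ with
  | and a b iha ihb | or a b iha ihb =>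
    simp only [subf, Set.mem_union, Set.mem_singleton_iff] at h
    rcases h with (h | h) | rfl
    · exact (iha h).trans (by simp [subf, Set.subset_def]; tauto)
    · exact (ihb h).trans (by simp [subf, Set.subset_def]; tauto)
    · rfl
  | dia a ih | box a ih =>
    simp only [subf, Set.mem_union, Set.mem_singleton_iff] at h
    rcases h with h | rfl
    · exact (ih h).trans Set.subset_union_left
    · rfl
  | _ => simp_all [subf]

section Subformulas

variable {a b θ : ModalFormula α}

theorem mem_subf_of_and_mem (h : .and a b ∈ subf θ) : a ∈ subf θ ∧ b ∈ subf θ :=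
  ⟨subf_subset_of_mem h (by simp [subf, mem_subf_self]),
    subf_subset_of_mem h (by simp [subf, mem_subf_self])⟩

theorem mem_subf_of_or_mem (h : .or a b ∈ subf θ) : a ∈ subf θ ∧ b ∈ subf θ :=
  ⟨subf_subset_of_mem h (by simp [subf, mem_subf_self]),
    subf_subset_of_mem h (by simp [subf, mem_subf_self])⟩

theorem mem_subf_of_dia_mem (h : .dia a ∈ subf θ) : a ∈ subf θ :=
  subf_subset_of_mem h (by simp [subf, mem_subf_self])

theorem mem_subf_of_box_mem (h : .box a ∈ subf θ) : a ∈ subf θ :=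
  subf_subset_of_mem h (by simp [subf, mem_subf_self])

end Subformulas

theorem subf_finite (θ : ModalFormula α) : (subf θ).Finite := by
  induction θ with
  | and _ _ iha ihb | or _ _ iha ihb => exact (iha.union ihb).union (Set.finite_singleton _)
  | dia _ ih | box _ ih => exact ih.union (Set.finite_singleton _)
  | _ => exact Set.finite_singleton _

theorem finite_setOf_isLType (φ : ModalFormula α) : {σ | IsLType φ σ}.Finite :=
  (subf_finite _).finite_subsets.subset fun _ h => h.1

theorem finite_setOf_isRType (ψ : ModalFormula α) : {σ | IsRType ψ σ}.Finite :=
  (subf_finite _).finite_subsets.subset fun _ h => h.1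

theorem occ_nnf_and_occ_nnfNeg (θ : ModalFormula α) :
    (∀ b, occ b (nnf θ) = occ b θ) ∧ ∀ b, occ b (nnfNeg θ) = occ (!b) θ := by
  induction θ with
  | atom p => simp [nnf, nnfNeg, occ]
  | neg _ ih => simp [nnf, nnfNeg, occ, ih.1, ih.2]
  | and _ _ iha ihb | or _ _ iha ihb => simp [nnf, nnfNeg, occ, iha.1, iha.2, ihb.1, ihb.2]
  | dia _ ih | box _ ih => simp [nnf, nnfNeg, occ, ih.1, ih.2]
  | _ => simp [nnf, nnfNeg, occ]

theorem occ_subset_of_mem_subf {χ θ : ModalFormula α} (h : χ ∈ subf θ) (b : Bool) :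
    occ b χ ⊆ occ b θ := by
  induction θ with
  | and _ _ iha ihb | or _ _ iha ihb =>
    simp only [subf, Set.mem_union, Set.mem_singleton_iff] at h
    rcases h with (h | h) | rfl
    · exact (iha h).trans Set.subset_union_left
    · exact (ihb h).trans Set.subset_union_right
    · rfl
  | dia _ ih | box _ ih =>
    simp only [subf, Set.mem_union, Set.mem_singleton_iff] at h
    rcases h with h | rfl
    · exact ih h
    · rfl
  | _ => simp_all [subf]

theorem occ_subset_of_mem_subf_nnf {χ φ : ModalFormula α} (h : χ ∈ subf (nnf φ)) (b : Bool) :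
    occ b χ ⊆ occ b φ :=
  (occ_nnf_and_occ_nnfNeg φ).1 b ▸ occ_subset_of_mem_subf h b

theorem occ_subset_of_mem_subf_nnf_neg {χ ψ : ModalFormula α} (h : χ ∈ subf (nnf (.neg ψ)))
    (b : Bool) : occ b χ ⊆ occ (!b) ψ :=
  (occ_nnf_and_occ_nnfNeg ψ).2 b ▸ occ_subset_of_mem_subf h b

theorem exists_finite_conj {ι : Type*} {S : Set ι} (hS : S.Finite) (f : ι → ModalFormula α) :
    ∃ θ : ModalFormula α, (∀ M w, Satisfies M w θ ↔ ∀ i ∈ S, Satisfies M w (f i)) ∧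
      ∀ b, occ b θ ⊆ ⋃ i ∈ S, occ b (f i) := by
  induction S, hS using Set.Finite.induction_on with
  | empty => exact ⟨.top, by simp [Satisfies], by simp [occ]⟩
  | @insert i S _ _ ih =>
    obtain ⟨θ, hsat, hocc⟩ := ih
    refine ⟨.and (f i) θ, fun M w => by simp [Satisfies, hsat], fun b => ?_⟩
    simp only [occ, Set.biUnion_insert]
    exact Set.union_subset_union_right _ (hocc b)

theorem exists_finite_disj {ι : Type*} {S : Set ι} (hS : S.Finite) (f : ι → ModalFormula α) :
    ∃ θ : ModalFormula α, (∀ M w, Satisfies M w θ ↔ ∃ i ∈ S, Satisfies M w (f i)) ∧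
      ∀ b, occ b θ ⊆ ⋃ i ∈ S, occ b (f i) := by
  induction S, hS using Set.Finite.induction_on with
  | empty => exact ⟨.bot, by simp [Satisfies], by simp [occ]⟩
  | @insert i S _ _ ih =>
    obtain ⟨θ, hsat, hocc⟩ := ih
    refine ⟨.or (f i) θ, fun M w => by simp [Satisfies, hsat], fun b => ?_⟩
    simp only [occ, Set.biUnion_insert]
    exact Set.union_subset_union_right _ (hocc b)

instance : Inhabited (ModalFormula α) := ⟨.top⟩

def Entails (Γ : Set (ModalFormula α)) (θ : ModalFormula α) : Prop :=
  ∀ (M : KripkeModel α) (w : M.World), (∀ χ ∈ Γ, Satisfies M w χ) → Satisfies M w θ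

def Refutes (θ : ModalFormula α) (Δ : Set (ModalFormula α)) : Prop :=
  ∀ (M : KripkeModel α) (w : M.World), Satisfies M w θ → ¬ ∀ χ ∈ Δ, Satisfies M w χ

def PolarityBounded (φ ψ θ : ModalFormula α) : Prop :=
  ∀ b, occ b θ ⊆ occ b φ ∩ occ b ψ

def IsInterpolant (φ ψ : ModalFormula α) (τ : Set (ModalFormula α) × Set (ModalFormula α))
    (θ : ModalFormula α) : Prop :=
  Entails τ.1 θ ∧ Refutes θ τ.2 ∧ PolarityBounded φ ψ θ

theorem PolarityBounded.of_subset_biUnion {ι : Type*} {φ ψ θ : ModalFormula α} {S : Set ι}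
    {f : ι → ModalFormula α} (hθ : ∀ b, occ b θ ⊆ ⋃ i ∈ S, occ b (f i))
    (hf : ∀ i ∈ S, PolarityBounded φ ψ (f i)) : PolarityBounded φ ψ θ :=
  fun b => (hθ b).trans (Set.iUnion₂_subset fun i hi => hf i hi b)

theorem exists_separator {φ ψ : ModalFormula α} {SL SR : Set (Set (ModalFormula α))}
    (hSL : SL.Finite) (hSR : SR.Finite)
    (h : ∀ σL ∈ SL, ∀ σR ∈ SR, ∃ θ, IsInterpolant φ ψ (σL, σR) θ) :
    ∃ δ, PolarityBounded φ ψ δ ∧ (∀ σ ∈ SL, Entails σ δ) ∧ ∀ σ ∈ SR, Refutes δ σ := by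
  choose! θ hθ using h
  choose conj hconj hconj_occ using fun σL => exists_finite_conj hSR (θ σL)
  obtain ⟨δ, hδ, hδ_occ⟩ := exists_finite_disj hSL conj
  refine ⟨δ, ?_, fun σL hσL M w hw => ?_, fun σR hσR M w hδw hw => ?_⟩
  · exact .of_subset_biUnion hδ_occ fun σL hσL =>
      .of_subset_biUnion (hconj_occ σL) fun σR hσR => (hθ σL hσL σR hσR).2.2
  · exact (hδ M w).2 ⟨σL, hσL, (hconj σL M w).2 fun σR hσR => (hθ σL hσL σR hσR).1 M w hw⟩
  · obtain ⟨σL, hσL, hconj_w⟩ := (hδ M w).1 hδw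
    exact (hθ σL hσL σR hσR).2.1 M w ((hconj σL M w).1 hconj_w σR hσR) hw

def realizedType (θ : ModalFormula α) (M : KripkeModel α) (w : M.World) :
    Set (ModalFormula α) :=
  {χ | χ ∈ subf θ ∧ Satisfies M w χ}

section RealizedType

variable (M : KripkeModel α)

theorem locallyConsistent_realizedType (θ : ModalFormula α) (w : M.World) :
    LocallyConsistent (realizedType θ M w) := by
  refine ⟨fun a b ⟨hs, hw⟩ => ?_, fun a b ⟨hs, hw⟩ => ?_, fun h => h.2, fun _ ⟨h, hn⟩ => hn.2 h.2⟩
  · exact ⟨⟨(mem_subf_of_and_mem hs).1, hw.1⟩, ⟨(mem_subf_of_and_mem hs).2, hw.2⟩⟩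
  · exact hw.imp (fun hw => ⟨(mem_subf_of_or_mem hs).1, hw⟩)
      fun hw => ⟨(mem_subf_of_or_mem hs).2, hw⟩

theorem isLType_realizedType (φ : ModalFormula α) (w : M.World) :
    IsLType φ (realizedType (nnf φ) M w) :=
  ⟨fun _ h => h.1, locallyConsistent_realizedType M _ w⟩

theorem isRType_realizedType (ψ : ModalFormula α) (w : M.World) :
    IsRType ψ (realizedType (nnf (.neg ψ)) M w) :=
  ⟨fun _ h => h.1, locallyConsistent_realizedType M _ w⟩

variable {M} {w v : M.World} {θ χ : ModalFormula α} {Γ : Set (ModalFormula α)}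

theorem mem_realizedType_of_box_mem (hΓ : Γ ⊆ subf θ) (hw : ∀ χ ∈ Γ, Satisfies M w χ)
    (hwv : M.R w v) (hχ : .box χ ∈ Γ) : χ ∈ realizedType θ M v :=
  ⟨mem_subf_of_box_mem (hΓ hχ), hw _ hχ v hwv⟩

theorem exists_mem_realizedType_of_dia_mem (hΓ : Γ ⊆ subf θ) (hw : ∀ χ ∈ Γ, Satisfies M w χ)
    (hχ : .dia χ ∈ Γ) : ∃ v, M.R w v ∧ χ ∈ realizedType θ M v :=
  let ⟨v, hwv, hv⟩ := hw _ hχ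
  ⟨v, hwv, mem_subf_of_dia_mem (hΓ hχ), hv⟩

end RealizedType

section Interpolants

variable {φ ψ : ModalFormula α} {τ : Set (ModalFormula α) × Set (ModalFormula α)}

theorem isInterpolant_of_complementary {θ θ' : ModalFormula α} (hτ : IsType φ ψ τ)
    (hθ : θ ∈ τ.1) (hθ' : θ' ∈ τ.2) (hsat : ∀ M w, Satisfies M w θ' ↔ ¬ Satisfies M w θ)
    (hocc : ∀ b, occ (!b) θ' = occ b θ) : IsInterpolant φ ψ τ θ := by
  refine ⟨fun M w hw => hw θ hθ, fun M w hw hw' => (hsat M w).1 (hw' θ' hθ') hw, fun b => ?_⟩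
  refine Set.subset_inter (occ_subset_of_mem_subf_nnf (hτ.1.1 hθ) b) ?_
  simpa [hocc] using occ_subset_of_mem_subf_nnf_neg (hτ.2.1 hθ') (!b)

theorem exists_isInterpolant_of_not_overlapConsistent (hτ : IsType φ ψ τ)
    (hoc : ¬ OverlapConsistent τ) : ∃ θ, IsInterpolant φ ψ τ θ := by
  simp only [OverlapConsistent, not_forall, ← not_or, not_not] at hoc
  obtain ⟨p, ⟨hp, hnp⟩ | ⟨hnp, hp⟩⟩ := hoc
  · exact ⟨_, isInterpolant_of_complementary hτ hp hnp (fun _ _ => Iff.rfl) (by simp [occ])⟩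
  · exact ⟨_, isInterpolant_of_complementary hτ hnp hp (fun _ _ => not_not.symm) (by simp [occ])⟩

theorem exists_isInterpolant_of_dia_mem_left {χ : ModalFormula α} (hτ : IsType φ ψ τ)
    (hχ : .dia χ ∈ τ.1)
    (h : ∀ σ, IsType φ ψ σ → TypeSucc τ σ → χ ∈ σ.1 → ∃ θ, IsInterpolant φ ψ σ θ) :
    ∃ θ, IsInterpolant φ ψ τ θ := by
  obtain ⟨δ, hδ, hδL, hδR⟩ := exists_separator
    (SL := {σ | IsLType φ σ ∧ χ ∈ σ ∧ ∀ χ', .box χ' ∈ τ.1 → χ' ∈ σ})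
    (SR := {σ | IsRType ψ σ ∧ ∀ χ', .box χ' ∈ τ.2 → χ' ∈ σ})
    ((finite_setOf_isLType φ).subset fun _ h => h.1)
    ((finite_setOf_isRType ψ).subset fun _ h => h.1)
    fun σL ⟨hL, hχL, hsL⟩ σR ⟨hR, hsR⟩ => h (σL, σR) ⟨hL, hR⟩ ⟨hsL, hsR⟩ hχL
  refine ⟨.dia δ, fun M w hw => ?_, fun M w ⟨v, hwv, hv⟩ hw => ?_, hδ⟩
  · obtain ⟨v, hwv, hχv⟩ := exists_mem_realizedType_of_dia_mem hτ.1.1 hw hχ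
    refine ⟨v, hwv, hδL _ ⟨isLType_realizedType M φ v, hχv, fun _ hb => ?_⟩ M v fun _ h => h.2⟩
    exact mem_realizedType_of_box_mem hτ.1.1 hw hwv hb
  · refine hδR _ ⟨isRType_realizedType M ψ v, fun _ hb => ?_⟩ M v hv fun _ h => h.2
    exact mem_realizedType_of_box_mem hτ.2.1 hw hwv hb

theorem exists_isInterpolant_of_dia_mem_right {χ : ModalFormula α} (hτ : IsType φ ψ τ)
    (hχ : .dia χ ∈ τ.2)
    (h : ∀ σ, IsType φ ψ σ → TypeSucc τ σ → χ ∈ σ.2 → ∃ θ, IsInterpolant φ ψ σ θ) :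
    ∃ θ, IsInterpolant φ ψ τ θ := by
  obtain ⟨δ, hδ, hδL, hδR⟩ := exists_separator
    (SL := {σ | IsLType φ σ ∧ ∀ χ', .box χ' ∈ τ.1 → χ' ∈ σ})
    (SR := {σ | IsRType ψ σ ∧ χ ∈ σ ∧ ∀ χ', .box χ' ∈ τ.2 → χ' ∈ σ})
    ((finite_setOf_isLType φ).subset fun _ h => h.1)
    ((finite_setOf_isRType ψ).subset fun _ h => h.1)
    fun σL ⟨hL, hsL⟩ σR ⟨hR, hχR, hsR⟩ => h (σL, σR) ⟨hL, hR⟩ ⟨hsL, hsR⟩ hχR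
  refine ⟨.box δ, fun M w hw v hwv => ?_, fun M w hδw hw => ?_, hδ⟩
  · refine hδL _ ⟨isLType_realizedType M φ v, fun _ hb => ?_⟩ M v fun _ h => h.2
    exact mem_realizedType_of_box_mem hτ.1.1 hw hwv hb
  · obtain ⟨v, hwv, hχv⟩ := exists_mem_realizedType_of_dia_mem hτ.2.1 hw hχ
    refine hδR _ ⟨isRType_realizedType M ψ v, hχv, fun _ hb => ?_⟩ M v (hδw v hwv) fun _ h => h.2
    exact mem_realizedType_of_box_mem hτ.2.1 hw hwv hb

end Interpolants

def Uninterpolated (φ ψ : ModalFormula α) : Set (Set (ModalFormula α) × Set (ModalFormula α)) :=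
  {τ | IsType φ ψ τ ∧ OverlapConsistent τ ∧ ¬ ∃ θ, IsInterpolant φ ψ τ θ}

theorem exists_isInterpolant_of_not_mem_uninterpolated {φ ψ : ModalFormula α}
    {τ : Set (ModalFormula α) × Set (ModalFormula α)} (hτ : IsType φ ψ τ)
    (hτU : τ ∉ Uninterpolated φ ψ) : ∃ θ, IsInterpolant φ ψ τ θ := by
  by_cases hoc : OverlapConsistent τ
  · by_contra hno
    exact hτU ⟨hτ, hoc, hno⟩
  · exact exists_isInterpolant_of_not_overlapConsistent hτ hoc

theorem quasiModel_uninterpolated (φ ψ : ModalFormula α) :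
    QuasiModel φ ψ (Uninterpolated φ ψ) := by
  refine ⟨fun _ hτ => hτ.1, fun _ hτ => hτ.2.1, fun τ hτ χ => ⟨fun hχ => ?_, fun hχ => ?_⟩⟩
  all_goals
    by_contra! hno
    refine hτ.2.2 ?_
  · exact exists_isInterpolant_of_dia_mem_left hτ.1 hχ fun σ hσ hsucc hχσ =>
      exists_isInterpolant_of_not_mem_uninterpolated hσ fun hσU => hno σ hσU hsucc hχσ
  · exact exists_isInterpolant_of_dia_mem_right hτ.1 hχ fun σ hσ hsucc hχσ =>
      exists_isInterpolant_of_not_mem_uninterpolated hσ fun hσU => hno σ hσU hsucc hχσ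

/-- Interpolants for eliminated types: every combined type belonging to no
quasi-model has an interpolant θ with `⊨ ⋀τL → θ`, `⊨ θ → ¬⋀τR`, and the
Lyndon polarity conditions with respect to φ and ψ. -/
theorem eliminated_type_interpolant {α : Type} (φ ψ : ModalFormula α)
    (hval : Valid (φ.impl ψ))
    (τ : Set (ModalFormula α) × Set (ModalFormula α))
    (hτ : IsType φ ψ τ)
    (helim : ∀ X, QuasiModel φ ψ X → τ ∉ X) :
    ∃ θ : ModalFormula α,
      (∀ (M : KripkeModel α) (w : M.World),
        (∀ χ ∈ τ.1, Satisfies M w χ) → Satisfies M w θ) ∧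
      (∀ (M : KripkeModel α) (w : M.World),
        Satisfies M w θ → ¬ ∀ χ ∈ τ.2, Satisfies M w χ) ∧
      occ true θ ⊆ occ true φ ∩ occ true ψ ∧
      occ false θ ⊆ occ false φ ∩ occ false ψ := by
  obtain ⟨θ, hL, hR, hpol⟩ := exists_isInterpolant_of_not_mem_uninterpolated hτ
    (helim _ (quasiModel_uninterpolated φ ψ))
  exact ⟨θ, hL, hR, hpol true, hpol false⟩
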